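/- If κ is a measurable cardinal, then 𝔡_{id⁺}(∈*) = 2^κ, where id⁺ : κ → κ is the function α ↦ α⁺. -/

import Mathlib

open Cardinal Set

universe u

namespace GenLoc

/-- `α` realizes its cardinal `κ = #α` as an order: every proper initial segment has
cardinality `< #α`.  Together with `[LinearOrder α] [WellFoundedLT α]` this says that
`α` is order-isomorphic to the initial ordinal of `#α`, i.e. `α` is a copy of the
cardinal `κ` with its ordinal order. -/
def IsKappaLike (α : Type u) [Preorder α] : Prop :=
  ∀ a : α, #(Set.Iio a) < #α

/-- `A` is a bounded subset of `α` (bounded in `κ`). -/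
def BddSet {α : Type u} [LT α] (A : Set α) : Prop :=
  ∃ b : α, ∀ x ∈ A, x < b

/-- The bounded ideal `J^κ_bd` on `κ`. -/
def bddIdeal (α : Type u) [LT α] : Set (Set α) :=
  { A | BddSet A }

/-- `I` is an ideal of subsets of `α` (of `κ`). -/
structure IsIdeal {α : Type u} (I : Set (Set α)) : Prop where
  empty_mem : (∅ : Set α) ∈ I
  subset_mem : ∀ A ∈ I, ∀ B : Set α, B ⊆ A → B ∈ I
  union_mem : ∀ A ∈ I, ∀ B ∈ I, A ∪ B ∈ I

/-- An `h`-slalom: a map `φ : κ → P(κ)` with `|φ α| ≤ |h α|` for every `α < κ`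
(`|h a|`, the cardinality of the ordinal `h a`, is `#(Set.Iio (h a))`). -/
def IsSlalom {α : Type u} [Preorder α] (h : α → α) (φ : α → Set α) : Prop :=
  ∀ a : α, #(φ a) ≤ #(Set.Iio (h a))

/-- `f ∈^I φ` : the set of points where `φ` fails to capture `f` is in the ideal `I`. -/
def LocIn {α : Type u} (I : Set (Set α)) (f : α → α) (φ : α → Set α) : Prop :=
  { a | f a ∉ φ a } ∈ I

/-- The localization bounding number `𝔟_h(∈^I)`. -/
noncomputable def locB {α : Type u} [Preorder α] (I : Set (Set α)) (h : α → α) :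
    Cardinal.{u} :=
  sInf { c | ∃ F : Set (α → α), #F = c ∧
    ∀ φ : α → Set α, IsSlalom h φ → ∃ f ∈ F, ¬ LocIn I f φ }

/-- The localization dominating number `𝔡_h(∈^I)`. -/
noncomputable def locD {α : Type u} [Preorder α] (I : Set (Set α)) (h : α → α) :
    Cardinal.{u} :=
  sInf { c | ∃ A : Set (α → Set α), #A = c ∧ (∀ φ ∈ A, IsSlalom h φ) ∧
    ∀ f : α → α, ∃ φ ∈ A, LocIn I f φ }

/-- `U` is an ultrafilter of subsets of `α`. -/
structure IsUltrafilterOn {α : Type u} (U : Set (Set α)) : Prop where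
  univ_mem : Set.univ ∈ U
  empty_not_mem : (∅ : Set α) ∉ U
  superset_mem : ∀ A ∈ U, ∀ B : Set α, A ⊆ B → B ∈ U
  inter_mem : ∀ A ∈ U, ∀ B ∈ U, A ∩ B ∈ U
  mem_or_compl_mem : ∀ A : Set α, A ∈ U ∨ Aᶜ ∈ U

/-- `U` is `κ`-complete: intersections of fewer than `κ` many members of `U` are in `U`. -/
def IsKappaComplete {α : Type u} (κ : Cardinal.{u}) (U : Set (Set α)) : Prop :=
  ∀ S : Set (Set α), S ⊆ U → #S < κ → ⋂₀ S ∈ U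

/-- `U` is σ-complete: closed under countable intersections. -/
def IsSigmaComplete {α : Type u} (U : Set (Set α)) : Prop :=
  ∀ f : ℕ → Set α, (∀ n, f n ∈ U) → (⋂ n, f n) ∈ U

/-- `U` is nonprincipal. -/
def IsNonprincipalOn {α : Type u} (U : Set (Set α)) : Prop :=
  ∀ a : α, ({a} : Set α) ∉ U

/-- `U` is a uniform ultrafilter: all its members have full size `#α`. -/
def IsUniform {α : Type u} (U : Set (Set α)) : Prop :=
  ∀ A ∈ U, #A = #α

/-- `κ = #α` is a measurable cardinal: it is uncountable and carries a
`κ`-complete nonprincipal ultrafilter. -/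
def IsMeasurableOn (α : Type u) : Prop :=
  ℵ₀ < #α ∧ ∃ U : Set (Set α),
    IsUltrafilterOn U ∧ IsNonprincipalOn U ∧ IsKappaComplete #α U

/-- `U` is a normal ultrafilter on `κ`: `κ`-complete, nonprincipal, and every function
which is regressive on a set in `U` is constant on a set in `U`. -/
def IsNormalUFOn {α : Type u} [LT α] (U : Set (Set α)) : Prop :=
  IsUltrafilterOn U ∧ IsNonprincipalOn U ∧ IsKappaComplete #α U ∧
    ∀ f : α → α, { a | f a < a } ∈ U → ∃ c : α, { a | f a = c } ∈ U

/-- The `ξ`-th iterated cardinal successor of `κ`, taking suprema at limit stages. -/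
noncomputable def iterSucc (κ : Cardinal.{u}) (ξ : Ordinal.{u}) : Cardinal.{u} :=
  Ordinal.limitRecOn ξ κ (fun _ ih => Order.succ ih)
    fun ξ' _ ih => ⨆ η : Set.Iio ξ', ih η.1 η.2

/-- A partial `h`-slalom with (unbounded) domain `D`. -/
def IsPartialSlalom {α : Type u} [Preorder α] (h : α → α) (D : Set α) (φ : α → Set α) :
    Prop :=
  (∀ a : α, ∃ b ∈ D, a ≤ b) ∧ ∀ a ∈ D, #(φ a) ≤ #(Set.Iio (h a))

/-- `f ∈* φ` for a partial slalom with domain `D`: the set of points of `D` where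
`φ` fails to capture `f` is bounded. -/
def PLocStar {α : Type u} [LT α] (D : Set α) (f : α → α) (φ : α → Set α) : Prop :=
  BddSet { a | a ∈ D ∧ f a ∉ φ a }

/-- The partial-slalom localization bounding number `𝔟_h(p∈*)`. -/
noncomputable def locBP {α : Type u} [Preorder α] (h : α → α) : Cardinal.{u} :=
  sInf { c | ∃ F : Set (α → α), #F = c ∧
    ∀ (D : Set α) (φ : α → Set α), IsPartialSlalom h D φ → ∃ f ∈ F, ¬ PLocStar D f φ }

/-- The partial-slalom localization dominating number `𝔡_h(p∈*)`. -/
noncomputable def locDP {α : Type u} [Preorder α] (h : α → α) : Cardinal.{u} :=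
  sInf { c | ∃ A : Set (Set α × (α → Set α)), #A = c ∧
    (∀ p ∈ A, IsPartialSlalom h p.1 p.2) ∧
    ∀ f : α → α, ∃ p ∈ A, PLocStar p.1 f p.2 }

/-- The unbounding number `𝔟_κ` (for the eventual domination order `≤*`). -/
noncomputable def bddNum (α : Type u) [Preorder α] : Cardinal.{u} :=
  sInf { c | ∃ F : Set (α → α), #F = c ∧
    ∀ g : α → α, ∃ f ∈ F, ¬ BddSet { a | ¬ f a ≤ g a } }

/-- The dominating number `𝔡_κ` (for the eventual domination order `≤*`). -/
noncomputable def domNum (α : Type u) [Preorder α] : Cardinal.{u} :=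
  sInf { c | ∃ F : Set (α → α), #F = c ∧
    ∀ g : α → α, ∃ f ∈ F, BddSet { a | ¬ g a ≤ f a } }

/-- `φ ⊆^I ψ` for slaloms. -/
def SubIn {α : Type u} (I : Set (Set α)) (φ ψ : α → Set α) : Prop :=
  { a | ¬ φ a ⊆ ψ a } ∈ I

/-- `𝔟_h(⊆^I)`: the least size of a family of `h`-slaloms with no single
`h`-slalom `⊆^I`-above all of them. -/
noncomputable def subB {α : Type u} [Preorder α] (I : Set (Set α)) (h : α → α) :
    Cardinal.{u} :=
  sInf { c | ∃ F : Set (α → Set α), #F = c ∧ (∀ φ ∈ F, IsSlalom h φ) ∧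
    ∀ ψ : α → Set α, IsSlalom h ψ → ∃ φ ∈ F, ¬ SubIn I φ ψ }

/-- `𝔡_h(⊆^I)`: the least size of a `⊆^I`-cofinal family of `h`-slaloms. -/
noncomputable def subD {α : Type u} [Preorder α] (I : Set (Set α)) (h : α → α) :
    Cardinal.{u} :=
  sInf { c | ∃ A : Set (α → Set α), #A = c ∧ (∀ φ ∈ A, IsSlalom h φ) ∧
    ∀ ψ : α → Set α, IsSlalom h ψ → ∃ φ ∈ A, SubIn I ψ φ }

/-- `C` is a closed unbounded (club) subset of `κ`. -/
def IsClubIn (α : Type u) [Preorder α] (C : Set α) : Prop :=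
  (∀ a : α, ∃ b ∈ C, a ≤ b) ∧
    ∀ a : α, (∃ b, b < a) → (∀ b, b < a → ∃ c ∈ C, b < c ∧ c < a) → a ∈ C

/-- `f ∈^cl φ` : `{α < κ : f α ∈ φ α}` contains a club. -/
def ClubLocIn {α : Type u} [Preorder α] (f : α → α) (φ : α → Set α) : Prop :=
  ∃ C : Set α, IsClubIn α C ∧ ∀ a ∈ C, f a ∈ φ a

/-- `A` is a stationary subset of `κ`: it meets every club. -/
def IsStatIn (α : Type u) [Preorder α] (A : Set α) : Prop :=
  ∀ C : Set α, IsClubIn α C → (A ∩ C).Nonempty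

/-- `R` is a stationary class: nonempty, consisting of stationary sets,
and upward closed under inclusion. -/
def IsStatClass (α : Type u) [Preorder α] (R : Set (Set α)) : Prop :=
  R.Nonempty ∧ (∀ A ∈ R, IsStatIn α A) ∧ ∀ A ∈ R, ∀ B : Set α, A ⊆ B → B ∈ R

/-- `κ = #α` is completely ineffable: there is a stationary class `R` such that every
colouring `F : [A]² → 2` of pairs from some `A ∈ R` is constant on `[B]²` for some
`B ∈ R` with `B ⊆ A`. -/
def CompletelyIneffable (α : Type u) [Preorder α] : Prop :=
  ∃ R : Set (Set α), IsStatClass α R ∧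
    ∀ A ∈ R, ∀ F : α → α → Fin 2,
      ∃ B ∈ R, B ⊆ A ∧ ∃ i : Fin 2, ∀ a ∈ B, ∀ b ∈ B, a < b → F a b = i

/-- `𝔭_κ`: the pseudo-intersection number of `κ`. -/
noncomputable def pseudoNum (α : Type u) : Cardinal.{u} :=
  sInf { c | ∃ F : Set (Set α), #F = c ∧ (∀ B ∈ F, #B = #α) ∧
    (∀ G ⊆ F, #G < #α → #(⋂₀ G) = #α) ∧
    ¬ ∃ A : Set α, #A = #α ∧ ∀ B ∈ F, #(A \ B : Set α) < #α }

/-- `𝔰_κ`: the splitting number of `κ`. -/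
noncomputable def splitNum (α : Type u) : Cardinal.{u} :=
  sInf { c | ∃ S : Set (Set α), #S = c ∧ (∀ B ∈ S, #B = #α) ∧
    ∀ A : Set α, #A = #α →
      ∃ B ∈ S, #(A ∩ B : Set α) = #α ∧ #(A \ B : Set α) = #α }

/-- `|κ^κ / I|`: the cardinality of the quotient of `κ^κ` by equality mod `I`. -/
noncomputable def quotFull {α : Type u} (I : Set (Set α)) : Cardinal.{u} :=
  #(Quot fun f g : α → α => { a | f a ≠ g a } ∈ I)

/-- `|∏_{α<κ} t(α) / I|`: the quotient of `∏_{α<κ} t(α)` by equality mod `I`. -/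
noncomputable def quotProd {α : Type u} [Preorder α] (I : Set (Set α)) (t : α → α) :
    Cardinal.{u} :=
  #(Quot fun f g : { f : α → α // ∀ a, f a < t a } => { a | f.1 a ≠ g.1 a } ∈ I)

/-- `|∏_{α<κ} h(α)⁺ / J|`: here `g < h(α)⁺` is expressed by `|g α| ≤ |h α|`. -/
noncomputable def quotProdSucc {α : Type u} [Preorder α] (J : Set (Set α)) (h : α → α) :
    Cardinal.{u} :=
  #(Quot fun f g : { f : α → α // ∀ a, #(Set.Iio (f a)) ≤ #(Set.Iio (h a)) } =>
      { a | f.1 a ≠ g.1 a } ∈ J)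

/-- `|∏_{α<κ} t(α) / U|` for an ultrafilter `U`, via equality mod `U`. -/
noncomputable def quotProdU {α : Type u} [Preorder α] (U : Set (Set α)) (t : α → α) :
    Cardinal.{u} :=
  #(Quot fun f g : { f : α → α // ∀ a, f a < t a } => { a | f.1 a = g.1 a } ∈ U)

/-- `|∏_{α<κ} h(α)⁺ / U|` for an ultrafilter `U`, via equality mod `U`. -/
noncomputable def quotProdSuccU {α : Type u} [Preorder α] (U : Set (Set α)) (h : α → α) :
    Cardinal.{u} :=
  #(Quot fun f g : { f : α → α // ∀ a, #(Set.Iio (f a)) ≤ #(Set.Iio (h a)) } =>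
      { a | f.1 a = g.1 a } ∈ U)

/-- `cf(κ^κ/U)`: the least size of a family cofinal in the ultraproduct order `<_U`. -/
noncomputable def cofUQuot {α : Type u} (U : Set (Set α)) [LT α] : Cardinal.{u} :=
  sInf { c | ∃ C : Set (α → α), #C = c ∧
    ∀ g : α → α, ∃ f ∈ C, { a | g a < f a } ∈ U }


section Helpers

variable {α : Type u} [LinearOrder α] [WellFoundedLT α]

private lemma no_desc (v : ℕ → α) (hv : ∀ n, v (n + 1) < v n) : False := by
  obtain ⟨m, ⟨n, rfl⟩, hmin⟩ :=
    (wellFounded_lt (α := α)).has_min (Set.range v) ⟨v 0, Set.mem_range_self 0⟩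
  exact hmin (v (n + 1)) (Set.mem_range_self _) (hv n)

private lemma exists_two_gt (hlike : IsKappaLike α) (hbig : ℵ₀ < #α) (a b : α) :
    ∃ c, a < c ∧ b < c := by
  have h1 : ∀ x : α, ∃ c, x < c := by
    intro x
    by_contra hcount
    push_neg at hcount
    have hsub : (Set.univ : Set α) ⊆ Set.Iio x ∪ {x} := by
      intro y _
      rcases lt_or_eq_of_le (hcount y) with hy | hy
      · exact Or.inl hy
      · exact Or.inr (by simp [hy])
    have hle : #α ≤ #(Set.Iio x) + 1 := by
      calc #α = #(Set.univ : Set α) := Cardinal.mk_univ.symm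
        _ ≤ #(Set.Iio x ∪ {x} : Set α) := Cardinal.mk_le_mk_of_subset hsub
        _ ≤ #(Set.Iio x) + #({x} : Set α) := Cardinal.mk_union_le _ _
        _ = #(Set.Iio x) + 1 := by rw [Cardinal.mk_singleton]
    have hlt : #(Set.Iio x) + 1 < #α :=
      Cardinal.add_lt_of_lt hbig.le (hlike x) (Cardinal.one_lt_aleph0.trans hbig)
    exact absurd hle (not_le_of_gt hlt)
  obtain ⟨c1, hc1⟩ := h1 a
  obtain ⟨c2, hc2⟩ := h1 b
  exact ⟨max c1 c2, lt_of_lt_of_le hc1 (le_max_left _ _),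
    lt_of_lt_of_le hc2 (le_max_right _ _)⟩

private lemma bdd_small (hlike : IsKappaLike α) {A : Set α} (hA : BddSet A) : #A < #α := by
  obtain ⟨b, hb⟩ := hA
  exact lt_of_le_of_lt (Cardinal.mk_le_mk_of_subset fun x hx => hb x hx) (hlike b)

variable {U : Set (Set α)}

private lemma compl_small_mem (hu : IsUltrafilterOn U) (hnp : IsNonprincipalOn U)
    (hc : IsKappaComplete #α U) {S : Set α} (hS : #S < #α) : Sᶜ ∈ U := by
  have hsingle : ∀ x : α, ({x} : Set α)ᶜ ∈ U := fun x =>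
    (hu.mem_or_compl_mem {x}).resolve_left (hnp x)
  have himg : ((fun x : α => ({x} : Set α)ᶜ) '' S : Set (Set α)) ⊆ U := by
    rintro _ ⟨x, _, rfl⟩; exact hsingle x
  have hcard : #((fun x : α => ({x} : Set α)ᶜ) '' S) < #α :=
    lt_of_le_of_lt Cardinal.mk_image_le hS
  have hmem := hc _ himg hcard
  have heq : ⋂₀ ((fun x : α => ({x} : Set α)ᶜ) '' S) = Sᶜ := by
    ext y
    rw [Set.sInter_image]
    simp only [Set.mem_iInter, Set.mem_compl_iff, Set.mem_singleton_iff]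
    constructor
    · intro hy hyS; exact hy y hyS rfl
    · intro hy x hxS hxy; exact hy (hxy ▸ hxS)
  rwa [heq] at hmem

private lemma small_not_mem (hu : IsUltrafilterOn U) (hnp : IsNonprincipalOn U)
    (hc : IsKappaComplete #α U) {S : Set α} (hS : #S < #α) : S ∉ U := by
  intro hmem
  have h1 := hu.inter_mem S hmem Sᶜ (compl_small_mem hu hnp hc hS)
  rw [Set.inter_compl_self] at h1
  exact hu.empty_not_mem h1

private lemma bdd_not_mem (hlike : IsKappaLike α) (hu : IsUltrafilterOn U)
    (hnp : IsNonprincipalOn U) (hc : IsKappaComplete #α U) {S : Set α}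
    (hS : BddSet S) : S ∉ U :=
  small_not_mem hu hnp hc (bdd_small hlike hS)

private lemma mem_or_mem (hu : IsUltrafilterOn U) {A B : Set α} (hAB : A ∪ B ∈ U) :
    A ∈ U ∨ B ∈ U := by
  by_contra hcon
  push_neg at hcon
  have hA := (hu.mem_or_compl_mem A).resolve_left hcon.1
  have hB := (hu.mem_or_compl_mem B).resolve_left hcon.2
  have h1 := hu.inter_mem _ hA _ hB
  have h2 := hu.inter_mem _ hAB _ h1
  rw [← Set.compl_union, Set.inter_compl_self] at h2
  exact hu.empty_not_mem h2

private lemma mem_of_three (hu : IsUltrafilterOn U) {A B C : Set α}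
    (hABC : A ∪ B ∪ C = Set.univ) : A ∈ U ∨ B ∈ U ∨ C ∈ U := by
  have huniv : A ∪ B ∪ C ∈ U := hABC ▸ hu.univ_mem
  rcases mem_or_mem hu huniv with h1 | h1
  · rcases mem_or_mem hu h1 with h2 | h2
    exacts [Or.inl h2, Or.inr (Or.inl h2)]
  · exact Or.inr (Or.inr h1)

private lemma inter_seq_mem (hbig : ℵ₀ < #α) (hc : IsKappaComplete #α U)
    (f : ℕ → Set α) (hf : ∀ n, f n ∈ U) : (⋂ n, f n) ∈ U := by
  have hsub : (Set.range f) ⊆ U := by rintro _ ⟨n, rfl⟩; exact hf n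
  have hcard : #(Set.range f) < #α := by
    refine lt_of_le_of_lt ?_ hbig
    haveI := (Set.countable_range f).to_subtype
    exact Cardinal.mk_le_aleph0
  have := hc _ hsub hcard
  rwa [Set.sInter_range] at this

private lemma rU_no_desc (hbig : ℵ₀ < #α) (hu : IsUltrafilterOn U)
    (hc : IsKappaComplete #α U) (u : ℕ → α → α)
    (hdesc : ∀ n, {a | u (n + 1) a < u n a} ∈ U) : False := by
  have hT : (⋂ n, {a | u (n + 1) a < u n a}) ∈ U := inter_seq_mem hbig hc _ hdesc
  have hne : (⋂ n, {a | u (n + 1) a < u n a}).Nonempty := by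
    rcases Set.eq_empty_or_nonempty (⋂ n, {a | u (n + 1) a < u n a}) with he | he
    · rw [he] at hT; exact absurd hT hu.empty_not_mem
    · exact he
  obtain ⟨a, ha⟩ := hne
  exact no_desc (fun n => u n a) fun n => Set.mem_iInter.1 ha n

private lemma powerset_small (hlike : IsKappaLike α) (hbig : ℵ₀ < #α)
    (hu : IsUltrafilterOn U) (hnp : IsNonprincipalOn U) (hc : IsKappaComplete #α U)
    (a : α) : #(Set (Set.Iio a)) < #α := by
  by_contra hcon
  push_neg at hcon
  obtain ⟨F⟩ := (Cardinal.le_def _ _).1 hcon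
  classical
  set E : Set.Iio a → Set α := fun i =>
    if {x : α | i ∈ F x} ∈ U then {x : α | i ∈ F x} else {x : α | i ∈ F x}ᶜ with hE
  have hEU : ∀ i, E i ∈ U := by
    intro i
    by_cases hmem : {x : α | i ∈ F x} ∈ U
    · simp only [hE, if_pos hmem]; exact hmem
    · simp only [hE, if_neg hmem]
      exact (hu.mem_or_compl_mem _).resolve_left hmem
  have hsub : Set.range E ⊆ U := by rintro _ ⟨i, rfl⟩; exact hEU i
  have hcard : #(Set.range E) < #α := lt_of_le_of_lt Cardinal.mk_range_le (hlike a)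
  have hT := hc _ hsub hcard
  have hagree : ∀ x ∈ ⋂₀ Set.range E, ∀ y ∈ ⋂₀ Set.range E, F x = F y := by
    intro x hx y hy
    ext i
    have hxE : x ∈ E i := (Set.mem_sInter.1 hx) _ ⟨i, rfl⟩
    have hyE : y ∈ E i := (Set.mem_sInter.1 hy) _ ⟨i, rfl⟩
    by_cases hmem : {x : α | i ∈ F x} ∈ U
    · simp only [hE, if_pos hmem, Set.mem_setOf_eq] at hxE hyE
      exact iff_of_true hxE hyE
    · simp only [hE, if_neg hmem, Set.mem_compl_iff, Set.mem_setOf_eq] at hxE hyE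
      exact iff_of_false hxE hyE
  have hsing : (⋂₀ Set.range E).Subsingleton := by
    intro x hx y hy
    exact F.injective (hagree x hx y hy)
  have hsmall : #(⋂₀ Set.range E) < #α := by
    refine lt_of_le_of_lt ?_ (Cardinal.one_lt_aleph0.trans hbig)
    exact Cardinal.mk_le_one_iff_set_subsingleton.2 hsing
  exact small_not_mem hu hnp hc hsmall hT

private lemma exists_normal (hbig : ℵ₀ < #α) (hu : IsUltrafilterOn U)
    (hnp : IsNonprincipalOn U) (hc : IsKappaComplete #α U) :
    ∃ V : Set (Set α), IsUltrafilterOn V ∧ IsNonprincipalOn V ∧ IsKappaComplete #α V ∧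
      ∀ p : α → α, {a | p a < a} ∈ V → ∃ c, {a | p a = c} ∈ V := by
  classical
  set G : Set (α → α) := {f | ∀ c, {a | f a = c} ∉ U} with hG
  have hidG : (id : α → α) ∈ G := by
    intro c
    have hs : {a : α | id a = c} = {c} := by ext x; simp
    rw [hs]; exact hnp c
  have hmin : ∃ f ∈ G, ∀ g ∈ G, {a | g a < f a} ∉ U := by
    by_contra hcon
    push_neg at hcon
    have hstep : ∀ f : {f // f ∈ G}, ∃ g : {f // f ∈ G}, {a | g.1 a < f.1 a} ∈ U := by
      rintro ⟨f, hf⟩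
      obtain ⟨g, hg, hgu⟩ := hcon f hf
      exact ⟨⟨g, hg⟩, hgu⟩
    choose step hstepU using hstep
    refine rU_no_desc hbig hu hc (fun n => (step^[n] ⟨id, hidG⟩).1) fun n => ?_
    have hit : step^[n + 1] ⟨id, hidG⟩ = step (step^[n] ⟨id, hidG⟩) :=
      Function.iterate_succ_apply' step n _
    show {a | (step^[n + 1] ⟨id, hidG⟩).1 a < (step^[n] ⟨id, hidG⟩).1 a} ∈ U
    rw [hit]
    exact hstepU _
  obtain ⟨f, hfG, hfmin⟩ := hmin
  refine ⟨{A | f ⁻¹' A ∈ U}, ⟨?_, ?_, ?_, ?_, ?_⟩, ?_, ?_, ?_⟩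
  · show f ⁻¹' Set.univ ∈ U
    rw [Set.preimage_univ]; exact hu.univ_mem
  · show f ⁻¹' ∅ ∉ U
    rw [Set.preimage_empty]; exact hu.empty_not_mem
  · intro A hA B hAB
    exact hu.superset_mem _ hA _ (Set.preimage_mono hAB)
  · intro A hA B hB
    show f ⁻¹' (A ∩ B) ∈ U
    rw [Set.preimage_inter]; exact hu.inter_mem _ hA _ hB
  · intro A
    rcases hu.mem_or_compl_mem (f ⁻¹' A) with hm | hm
    · exact Or.inl hm
    · right
      show f ⁻¹' Aᶜ ∈ U
      rw [Set.preimage_compl]; exact hm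
  · intro c
    exact hfG c
  · intro S hS hcard
    show f ⁻¹' ⋂₀ S ∈ U
    rw [Set.preimage_sInter, ← Set.sInter_image]
    refine hc _ ?_ (lt_of_le_of_lt Cardinal.mk_image_le hcard)
    rintro _ ⟨B, hB, rfl⟩
    exact hS hB
  · intro p hp
    have hpf : {a | (p ∘ f) a < f a} ∈ U := hp
    have hnG : (p ∘ f) ∉ G := fun hGm => hfmin _ hGm hpf
    simp only [hG, Set.mem_setOf_eq, not_forall, not_not] at hnG
    obtain ⟨c, hc'⟩ := hnG
    exact ⟨c, hc'⟩

private lemma wellorder_count {β : Type u} (r : β → β → Prop)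
    (htri : ∀ X Y : β, r X Y ∨ X = Y ∨ r Y X)
    (htrans : ∀ X Y Z : β, r X Y → r Y Z → r X Z)
    (hwf : WellFounded r) {c : Cardinal.{u}}
    (hseg : ∀ Y : β, #{X : β // r X Y} ≤ c) : #β ≤ Order.succ c := by
  haveI : IsTrichotomous β r := ⟨fun a b h1 h2 => ((htri a b).resolve_left h1).resolve_right h2⟩
  haveI : IsTrans β r := ⟨fun _ _ _ => htrans _ _ _⟩
  haveI : IsWellFounded β r := ⟨hwf⟩
  haveI : IsWellOrder β r := {}
  have htype : Ordinal.type r ≤ Cardinal.ord (Order.succ c) := by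
    refine le_of_forall_lt fun o ho => ?_
    obtain ⟨Z, hZ⟩ := Ordinal.typein_surj r ho
    rw [Cardinal.lt_ord, ← hZ]
    exact lt_of_le_of_lt (hseg Z) (Order.lt_succ _)
  calc #β = (Ordinal.type r).card := (Ordinal.card_type r).symm
    _ ≤ (Cardinal.ord (Order.succ c)).card := Ordinal.card_le_card htype
    _ = Order.succ c := Cardinal.card_ord _

private lemma fiber_bound (hlike : IsKappaLike α) (hbig : ℵ₀ < #α)
    {V : Set (Set α)} (hu : IsUltrafilterOn V) (hnp : IsNonprincipalOn V)
    (hc : IsKappaComplete #α V)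
    (hnorm : ∀ p : α → α, {a | p a < a} ∈ V → ∃ c, {a | p a = c} ∈ V)
    (h : α → α) (hsucc2 : ∀ a b : α, b < h a → #(Set.Iio b) ≤ #(Set.Iio a))
    {φ : α → Set α} (hφ : IsSlalom h φ) (g : Set α → α → α)
    (hgdiff : ∀ X Y : Set α, X ≠ Y → {a | g X a = g Y a} ∉ V) :
    #{X : Set α | {a | g X a ∈ φ a} ∈ V} ≤ Order.succ #α := by
  classical
  set F := {X : Set α | {a | g X a ∈ φ a} ∈ V} with hF
  let e : ∀ a : α, ↥(φ a) ↪ ↥(Set.Iio (h a)) := fun a =>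
    Classical.choice ((Cardinal.le_def _ _).1 (hφ a))
  let gh : Set α → α → α := fun X a =>
    if hx : g X a ∈ φ a then (e a ⟨g X a, hx⟩).1 else g X a
  have ghlt : ∀ (X : Set α) (a : α), g X a ∈ φ a → gh X a < h a := by
    intro X a hx
    show (if hx : g X a ∈ φ a then (e a ⟨g X a, hx⟩).1 else g X a) < h a
    rw [dif_pos hx]
    exact (e a ⟨g X a, hx⟩).2
  have ghinj : ∀ (X Y : Set α) (a : α), g X a ∈ φ a → g Y a ∈ φ a →
      gh X a = gh Y a → g X a = g Y a := by
    intro X Y a hx hy hxy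
    have hxy' : (e a ⟨g X a, hx⟩).1 = (e a ⟨g Y a, hy⟩).1 := by
      rwa [show gh X a = (e a ⟨g X a, hx⟩).1 from dif_pos hx,
        show gh Y a = (e a ⟨g Y a, hy⟩).1 from dif_pos hy] at hxy
    have := (e a).injective (Subtype.ext hxy')
    exact congrArg Subtype.val this
  -- the relation on F
  let r : ↥F → ↥F → Prop := fun X Y => {a | gh X.1 a < gh Y.1 a} ∈ V
  have hcapF : ∀ X : ↥F, {a | g X.1 a ∈ φ a} ∈ V := fun X => X.2
  have heqV : ∀ X Y : ↥F, {a | gh X.1 a = gh Y.1 a} ∈ V → X = Y := by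
    intro X Y hmem
    by_contra hne
    have hne' : X.1 ≠ Y.1 := fun hh => hne (Subtype.ext hh)
    have h1 := hu.inter_mem _ hmem _ (hu.inter_mem _ (hcapF X) _ (hcapF Y))
    have hsub : {a | gh X.1 a = gh Y.1 a} ∩ ({a | g X.1 a ∈ φ a} ∩ {a | g Y.1 a ∈ φ a})
        ⊆ {a | g X.1 a = g Y.1 a} := by
      rintro a ⟨h1', h2', h3'⟩
      exact ghinj _ _ a h2' h3' h1'
    exact hgdiff _ _ hne' (hu.superset_mem _ h1 _ hsub)
  have htri : ∀ X Y : ↥F, r X Y ∨ X = Y ∨ r Y X := by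
    intro X Y
    by_cases hne : X = Y
    · exact Or.inr (Or.inl hne)
    · have hcover : {a | gh X.1 a < gh Y.1 a} ∪ {a | gh X.1 a = gh Y.1 a} ∪
          {a | gh Y.1 a < gh X.1 a} = Set.univ := by
        ext a
        simp only [Set.mem_union, Set.mem_setOf_eq, Set.mem_univ, iff_true]
        rcases lt_trichotomy (gh X.1 a) (gh Y.1 a) with hh | hh | hh
        exacts [Or.inl (Or.inl hh), Or.inl (Or.inr hh), Or.inr hh]
      rcases mem_of_three hu hcover with hm | hm | hm
      · exact Or.inl hm
      · exact absurd (heqV _ _ hm) hne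
      · exact Or.inr (Or.inr hm)
  have htrans : ∀ X Y Z : ↥F, r X Y → r Y Z → r X Z := by
    intro X Y Z h1 h2
    refine hu.superset_mem _ (hu.inter_mem _ h1 _ h2) _ ?_
    rintro a ⟨ha1, ha2⟩
    exact lt_trans ha1 ha2
  have hirr : ∀ X : ↥F, ¬ r X X := by
    intro X hX
    have hempty : {a | gh X.1 a < gh X.1 a} = ∅ := by ext a; simp
    rw [show r X X = ({a | gh X.1 a < gh X.1 a} ∈ V) from rfl, hempty] at hX
    exact hu.empty_not_mem hX
  haveI : IsIrrefl ↥F r := ⟨hirr⟩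
  haveI : IsTrans ↥F r := ⟨htrans⟩
  haveI : IsStrictOrder ↥F r := {}
  have hwf : WellFounded r := by
    rw [RelEmbedding.wellFounded_iff_isEmpty]
    refine ⟨fun emb => ?_⟩
    refine rU_no_desc hbig hu hc (fun n => gh (emb n).1) fun n => ?_
    exact emb.map_rel_iff.2 (Nat.lt_succ_self n)
  -- segment bound
  have hseg : ∀ Y : ↥F, #{X : ↥F // r X Y} ≤ #α := by
    intro Y
    have hd : ∀ a : α, g Y.1 a ∈ φ a → Nonempty (↥(Set.Iio (gh Y.1 a)) ↪ ↥(Set.Iio a)) :=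
      fun a hca => (Cardinal.le_def _ _).1 (hsucc2 a _ (ghlt Y.1 a hca))
    let dd : ∀ a : α, g Y.1 a ∈ φ a → (↥(Set.Iio (gh Y.1 a)) ↪ ↥(Set.Iio a)) :=
      fun a hca => Classical.choice (hd a hca)
    let press : Set α → α → α := fun X a =>
      if hca : g Y.1 a ∈ φ a then
        (if hx : gh X a < gh Y.1 a then (dd a hca ⟨gh X a, hx⟩).1 else a)
      else a
    have hpress_lt : ∀ X : {X : ↥F // r X Y}, {a | press X.1.1 a < a} ∈ V := by
      intro X
      refine hu.superset_mem _ (hu.inter_mem _ (hcapF Y) _ X.2) _ ?_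
      rintro a ⟨hca0, hx0⟩
      have hca : g Y.1 a ∈ φ a := hca0
      have hx : gh X.1.1 a < gh Y.1 a := hx0
      show (if hca' : g Y.1 a ∈ φ a then
        (if hx' : gh X.1.1 a < gh Y.1 a then (dd a hca' ⟨gh X.1.1 a, hx'⟩).1 else a)
        else a) < a
      rw [dif_pos hca, dif_pos hx]
      exact (dd a hca ⟨gh X.1.1 a, hx⟩).2
    have hconst : ∀ X : {X : ↥F // r X Y}, ∃ c, {a | press X.1.1 a = c} ∈ V :=
      fun X => hnorm _ (hpress_lt X)
    choose cX hcX using hconst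
    have hinj : Function.Injective cX := by
      intro X X' hcc
      have hbigmem : {a | press X.1.1 a = cX X} ∩ ({a | press X'.1.1 a = cX X'} ∩
          ({a | g Y.1 a ∈ φ a} ∩ ({a | gh X.1.1 a < gh Y.1 a} ∩
          ({a | gh X'.1.1 a < gh Y.1 a} ∩
          ({a | g X.1.1 a ∈ φ a} ∩ {a | g X'.1.1 a ∈ φ a}))))) ∈ V := by
        refine hu.inter_mem _ (hcX X) _ (hu.inter_mem _ (hcX X') _
          (hu.inter_mem _ (hcapF Y) _ (hu.inter_mem _ X.2 _
          (hu.inter_mem _ X'.2 _ (hu.inter_mem _ (hcapF X.1) _ (hcapF X'.1))))))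
      have hsub : {a | press X.1.1 a = cX X} ∩ ({a | press X'.1.1 a = cX X'} ∩
          ({a | g Y.1 a ∈ φ a} ∩ ({a | gh X.1.1 a < gh Y.1 a} ∩
          ({a | gh X'.1.1 a < gh Y.1 a} ∩
          ({a | g X.1.1 a ∈ φ a} ∩ {a | g X'.1.1 a ∈ φ a})))))
          ⊆ {a | g X.1.1 a = g X'.1.1 a} := by
        rintro a ⟨h10, h20, hca0, hx0, hx'0, hcx0, hcx'0⟩
        have h1 : press X.1.1 a = cX X := h10
        have h2 : press X'.1.1 a = cX X' := h20
        have hca : g Y.1 a ∈ φ a := hca0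
        have hx : gh X.1.1 a < gh Y.1 a := hx0
        have hx' : gh X'.1.1 a < gh Y.1 a := hx'0
        have hcx : g X.1.1 a ∈ φ a := hcx0
        have hcx' : g X'.1.1 a ∈ φ a := hcx'0
        have e1 : press X.1.1 a = (dd a hca ⟨gh X.1.1 a, hx⟩).1 := by
          show (if hca' : g Y.1 a ∈ φ a then
            (if hx0 : gh X.1.1 a < gh Y.1 a then (dd a hca' ⟨gh X.1.1 a, hx0⟩).1 else a)
            else a) = _
          rw [dif_pos hca, dif_pos hx]
        have e2 : press X'.1.1 a = (dd a hca ⟨gh X'.1.1 a, hx'⟩).1 := by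
          show (if hca' : g Y.1 a ∈ φ a then
            (if hx0 : gh X'.1.1 a < gh Y.1 a then (dd a hca' ⟨gh X'.1.1 a, hx0⟩).1 else a)
            else a) = _
          rw [dif_pos hca, dif_pos hx']
        have heq2 : (dd a hca ⟨gh X.1.1 a, hx⟩).1 = (dd a hca ⟨gh X'.1.1 a, hx'⟩).1 := by
          rw [← e1, ← e2, h1, h2, hcc]
        have heq3 := (dd a hca).injective (Subtype.ext heq2)
        have heq4 : gh X.1.1 a = gh X'.1.1 a := congrArg Subtype.val heq3
        exact ghinj _ _ a hcx hcx' heq4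
      have hgmem : {a | g X.1.1 a = g X'.1.1 a} ∈ V := hu.superset_mem _ hbigmem _ hsub
      by_contra hne
      have hne' : X.1.1 ≠ X'.1.1 := by
        intro hver
        exact hne (Subtype.ext (Subtype.ext hver))
      exact hgdiff _ _ hne' hgmem
    exact (Cardinal.le_def _ _).2 ⟨⟨cX, hinj⟩⟩
  exact wellorder_count r htri htrans hwf hseg

end Helpers

/-- If `κ` is measurable then `𝔡_{id⁺}(∈*) = 2^κ`, where `id⁺ : κ → κ`
maps `α` to the cardinal successor `α⁺` (the least ordinal of cardinality `> |α|`). -/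
theorem statement1 (α : Type u) [LinearOrder α] [WellFoundedLT α]
    (hlike : IsKappaLike α) (hmeas : IsMeasurableOn α) (h : α → α)
    (hsucc : ∀ a : α, #(Set.Iio a) < #(Set.Iio (h a)) ∧
      ∀ b : α, #(Set.Iio a) < #(Set.Iio b) → h a ≤ b) :
    locD (bddIdeal α) h = 2 ^ #α := by
  classical
  obtain ⟨hbig, U0, hu0, hnp0, hc0⟩ := hmeas
  obtain ⟨V, hu, hnp, hc, hnorm⟩ := exists_normal hbig hu0 hnp0 hc0
  haveI hne : Nonempty α :=
    Cardinal.mk_ne_zero_iff.1 (ne_of_gt (lt_of_le_of_lt (Cardinal.zero_le _) hbig))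
  have hsucc2 : ∀ a b : α, b < h a → #(Set.Iio b) ≤ #(Set.Iio a) := by
    intro a b hb
    by_contra hcon
    push_neg at hcon
    exact absurd ((hsucc a).2 b hcon) (not_le_of_gt hb)
  have hiio_ne : ∀ a : α, (1 : Cardinal) ≤ #(Set.Iio (h a)) := by
    intro a
    rw [Cardinal.one_le_iff_pos]
    exact lt_of_le_of_lt (Cardinal.zero_le _) (hsucc a).1
  have hsinginj : Function.Injective (fun f : α → α => fun a => ({f a} : Set α)) := by
    intro f1 f2 hf
    funext a
    have := congrFun hf a
    simpa [Set.singleton_eq_singleton_iff] using this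
  have hAallcard : #(Set.range (fun f : α → α => fun a => ({f a} : Set α))) = 2 ^ #α := by
    rw [Cardinal.mk_range_eq _ hsinginj, ← Cardinal.power_def α α,
      Cardinal.power_self_eq hbig.le]
  have hmem : (2 : Cardinal) ^ #α ∈ {c | ∃ A : Set (α → Set α), #A = c ∧
      (∀ φ ∈ A, IsSlalom h φ) ∧ ∀ f : α → α, ∃ φ ∈ A, LocIn (bddIdeal α) f φ} := by
    refine ⟨Set.range (fun f : α → α => fun a => ({f a} : Set α)), hAallcard, ?_, ?_⟩
    · rintro φ ⟨f, rfl⟩ a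
      rw [Cardinal.mk_singleton]
      exact hiio_ne a
    · intro f
      refine ⟨fun a => ({f a} : Set α), ⟨f, rfl⟩, ?_⟩
      show {a | f a ∉ ({f a} : Set α)} ∈ bddIdeal α
      have hempty : {a | f a ∉ ({f a} : Set α)} = ∅ := by ext a; simp
      rw [hempty]
      exact ⟨Classical.arbitrary α, fun x hx => absurd hx (Set.notMem_empty x)⟩
  unfold locD
  refine le_antisymm (csInf_le' hmem) (le_csInf ⟨_, hmem⟩ ?_)
  rintro c ⟨A, rfl, hAslalom, hAdom⟩
  -- lower bound: `#A > #α`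
  have hAbig : #α < #A := by
    by_contra hcon
    push_neg at hcon
    obtain ⟨ι⟩ := (Cardinal.le_def _ _).1 hcon
    have hbigset : ∀ a : α, ∃ x : α, ∀ p : {p : ↥A // ι p < a},
        x ∉ (p.1.1 : α → Set α) a := by
      intro a
      by_contra hcon2
      push_neg at hcon2
      have hsub : (Set.univ : Set α) ⊆ ⋃ p : {p : ↥A // ι p < a}, p.1.1 a := by
        intro x _
        obtain ⟨p, hp⟩ := hcon2 x
        exact Set.mem_iUnion.2 ⟨p, hp⟩
      have hle : #α ≤ #(⋃ p : {p : ↥A // ι p < a}, p.1.1 a) :=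
        le_trans (le_of_eq Cardinal.mk_univ.symm) (Cardinal.mk_le_mk_of_subset hsub)
      have hidx : #{p : ↥A // ι p < a} ≤ #(Set.Iio a) := by
        refine (Cardinal.le_def _ _).2 ⟨⟨fun p => ⟨ι p.1, p.2⟩, ?_⟩⟩
        intro p q hpq
        exact Subtype.ext (ι.injective (congrArg Subtype.val hpq))
      have hbound := Cardinal.mk_iUnion_le (fun p : {p : ↥A // ι p < a} => p.1.1 a)
      have hsup : (⨆ p : {p : ↥A // ι p < a}, #(p.1.1 a)) ≤ #(Set.Iio (h a)) := by
        rcases isEmpty_or_nonempty {p : ↥A // ι p < a} with hemp | hne2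
        · rw [ciSup_of_empty]
          exact bot_le
        · exact ciSup_le' fun p => hAslalom _ p.1.2 a
      have hfinal : #α ≤ #(Set.Iio a) * #(Set.Iio (h a)) :=
        hle.trans (hbound.trans (mul_le_mul' hidx hsup))
      exact absurd hfinal
        (not_le_of_gt (Cardinal.mul_lt_of_lt hbig.le (hlike a) (hlike (h a))))
    choose fdiag hfdiag using hbigset
    obtain ⟨φ, hφA, hφloc⟩ := hAdom fdiag
    obtain ⟨b, hb⟩ := hφloc
    obtain ⟨a, hab, haι⟩ := exists_two_gt hlike hbig b (ι ⟨φ, hφA⟩)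
    have hnotin : fdiag a ∉ φ a := hfdiag a ⟨⟨φ, hφA⟩, haι⟩
    exact absurd (hb a hnotin) (lt_asymm hab)
  -- the coding functions
  have hpow : ∀ a : α, #(Set (Set.Iio a)) < #α := powerset_small hlike hbig hu hnp hc
  let code : ∀ a : α, Set (Set.Iio a) ↪ α := fun a =>
    Classical.choice ((Cardinal.le_def _ _).1 (hpow a).le)
  let g : Set α → α → α := fun X a => code a {i : Set.Iio a | (i : α) ∈ X}
  have hgdiff : ∀ X Y : Set α, X ≠ Y → BddSet {a | g X a = g Y a} := by
    intro X Y hXY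
    have hx : ∃ x, ¬(x ∈ X ↔ x ∈ Y) := by
      by_contra hcon
      push_neg at hcon
      exact hXY (Set.ext fun x => hcon x)
    obtain ⟨x, hx⟩ := hx
    obtain ⟨cb, hcb, -⟩ := exists_two_gt hlike hbig x x
    refine ⟨cb, ?_⟩
    intro a ha
    by_contra hacb
    push_neg at hacb
    have hxa : x < a := lt_of_lt_of_le hcb hacb
    have hga : code a {i : Set.Iio a | (i : α) ∈ X} = code a {i : Set.Iio a | (i : α) ∈ Y} :=
      ha
    have htr : {i : Set.Iio a | (i : α) ∈ X} = {i : Set.Iio a | (i : α) ∈ Y} :=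
      (code a).injective hga
    apply hx
    have := Set.ext_iff.1 htr ⟨x, hxa⟩
    simpa using this
  have hgdiffV : ∀ X Y : Set α, X ≠ Y → {a | g X a = g Y a} ∉ V :=
    fun X Y hXY => bdd_not_mem hlike hu hnp hc (hgdiff X Y hXY)
  have hcap : ∀ X : Set α, ∃ φ ∈ A, {a | g X a ∈ φ a} ∈ V := by
    intro X
    obtain ⟨φ, hφ, hloc⟩ := hAdom (g X)
    refine ⟨φ, hφ, ?_⟩
    have hbdd : BddSet {a | g X a ∉ φ a} := hloc
    have hcompl := compl_small_mem hu hnp hc (bdd_small hlike hbdd)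
    have hco : {a | g X a ∉ φ a}ᶜ = {a | g X a ∈ φ a} := by
      ext a; simp
    rwa [hco] at hcompl
  choose Φ hΦA hΦcap using hcap
  have hfib : ∀ φp : ↥A, #{X : Set α | Φ X = φp.1} ≤ Order.succ #α := by
    intro φp
    refine le_trans (Cardinal.mk_le_mk_of_subset ?_)
      (fiber_bound hlike hbig hu hnp hc hnorm h hsucc2 (hAslalom _ φp.2) g hgdiffV)
    intro X hX
    have hcX := hΦcap X
    rw [show Φ X = φp.1 from hX] at hcX
    exact hcX
  haveI hANe : Nonempty ↥A :=
    Cardinal.mk_ne_zero_iff.1 (ne_of_gt (lt_of_le_of_lt (Cardinal.zero_le _) hAbig))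
  have hcover : #(Set α) ≤ #↥A * ⨆ φp : ↥A, #{X : Set α | Φ X = φp.1} := by
    have hsub : (Set.univ : Set (Set α)) ⊆ ⋃ φp : ↥A, {X : Set α | Φ X = φp.1} :=
      fun X _ => Set.mem_iUnion.2 ⟨⟨Φ X, hΦA X⟩, rfl⟩
    exact le_trans (le_of_eq Cardinal.mk_univ.symm)
      (le_trans (Cardinal.mk_le_mk_of_subset hsub) (Cardinal.mk_iUnion_le _))
  have hsup2 : (⨆ φp : ↥A, #{X : Set α | Φ X = φp.1}) ≤ Order.succ #α := ciSup_le' hfib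
  have hsle : Order.succ #α ≤ #↥A := Order.succ_le_of_lt hAbig
  calc (2 : Cardinal) ^ #α = #(Set α) := Cardinal.mk_set.symm
    _ ≤ #↥A * (⨆ φp : ↥A, #{X : Set α | Φ X = φp.1}) := hcover
    _ ≤ #↥A * Order.succ #α := mul_le_mul_right hsup2 _
    _ ≤ #↥A * #↥A := mul_le_mul_right hsle _
    _ = #↥A := Cardinal.mul_eq_self (hbig.le.trans hAbig.le)

end GenLoc
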